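/- arXiv:2111.12349 — 2 statements merged into one kernel-verified Lean document; each statement's English description precedes it below -/
import Mathlib

section
/- Let d, k, n₂, t, n₃, d₁, d₂ be natural numbers satisfying: (i) 4·(k choose 2) + 2kd + (d choose 2) = n₂ + 2t + 3n₃; (ii) d₁ + d₂ = 2k + d − 1; (iii) d₁·d₂ + (n₂ + 3t + 4n₃) = (2k + d − 1)². Then, as integers, 4t + 4n₃ ≥ 4k² − 4k + 4kd + (d−1)(d−3); equivalently t ≥ k² − k + kd + (d−1)(d−3)/4 − n₃. -/
lemma two_choose_two (n : ℕ) : 2 * Nat.choose n 2 = n * (n - 1) := by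
  have h : 2 ∣ n * (n - 1) := by
    cases n with
    | zero => simp
    | succ m =>
      simpa [Nat.succ_sub_one, Nat.mul_comm] using (Nat.even_mul_succ_self m).two_dvd
  rw [Nat.choose_two_right, Nat.mul_div_cancel' h]

/-- A free conic-line arrangement with only nodes, tacnodes and ordinary triple
points satisfies, as integers, `4t + 4n₃ ≥ 4k² - 4k + 4kd + (d-1)(d-3)`. -/
theorem free_implies_tacnode_lower_bound (d k n2 t n3 d1 d2 : ℕ)
    (hcc : 4 * Nat.choose k 2 + 2 * k * d + Nat.choose d 2 = n2 + 2 * t + 3 * n3)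
    (hsum : (d1 : ℤ) + (d2 : ℤ) = 2 * (k : ℤ) + (d : ℤ) - 1)
    (hprod : (d1 : ℤ) * (d2 : ℤ) + ((n2 : ℤ) + 3 * (t : ℤ) + 4 * (n3 : ℤ)) =
        (2 * (k : ℤ) + (d : ℤ) - 1) ^ 2) :
    4 * (k : ℤ) ^ 2 - 4 * (k : ℤ) + 4 * (k : ℤ) * (d : ℤ)
        + ((d : ℤ) - 1) * ((d : ℤ) - 3) ≤ 4 * (t : ℤ) + 4 * (n3 : ℤ) := by
  have key : ∀ n : ℕ, 2 * (Nat.choose n 2 : ℤ) = (n : ℤ) * ((n : ℤ) - 1) := by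
    intro n
    cases n with
    | zero => simp
    | succ m =>
      have h : 2 * Nat.choose (m + 1) 2 = (m + 1) * m := by
        simpa using two_choose_two (m + 1)
      calc 2 * (Nat.choose (m + 1) 2 : ℤ)
          = ((2 * Nat.choose (m + 1) 2 : ℕ) : ℤ) := by push_cast; ring
        _ = (((m + 1) * m : ℕ) : ℤ) := by rw [h]
        _ = ((m + 1 : ℕ) : ℤ) * (((m + 1 : ℕ) : ℤ) - 1) := by push_cast; ring
  have hk := key k
  have hd := key d
  have hcc' : (4 * Nat.choose k 2 + 2 * k * d + Nat.choose d 2 : ℤ)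
      = (n2 : ℤ) + 2 * t + 3 * n3 := by exact_mod_cast congrArg (Nat.cast : ℕ → ℤ) hcc
  have hAM : 4 * ((d1 : ℤ) * d2) ≤ ((d1 : ℤ) + d2) ^ 2 := by
    nlinarith [sq_nonneg ((d1 : ℤ) - d2)]
  push_cast at hcc' hk hd
  nlinarith [hAM, hsum, hprod, hcc', hk, hd]
end

section
/- Let f = y·(x + y − 4z)·(x − y + 4z)·(x² + y² − 16z²) ∈ ℂ[x,y,z] (a smooth conic circumscribed about a triangle, i.e. a triangle inscribed in the conic), let J_f = ⟨∂f/∂x, ∂f/∂y, ∂f/∂z⟩ be its Jacobian ideal, and let m = ⟨x, y, z⟩. Then the colon ideal (J_f : m) equals J_f; that is, J_f is saturated with respect to m, i.e. the curve f = 0 is a free plane curve. -/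
/-!
In the coordinates `u = x + y - 4z`, `v = x - y + 4z`, `w = y` the curve becomes
`F = uvw(uv + uw - vw)`. The syzygies of `∂F/∂u, ∂F/∂v, ∂F/∂w` form a free module with two
explicit generators whose cross product is `-5 ∇F` (a Hilbert–Burch matrix), so `J_F` has a free
resolution of length two. Since `u, v, w` is a regular sequence, chasing a class through this
resolution and the Koszul complex of `u, v, w` shows that `J_F` is saturated. The chain rule
transports `J_F` and `m` to `J_f` and `m` along the linear change of coordinates.
-/

open Matrix MvPolynomial

section Colon

variable {R ι κ : Type*} [CommRing R]

theorem Ideal.span_range_mulVec_le [Fintype κ] (M : Matrix ι κ R) (v : κ → R) :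
    Ideal.span (Set.range (M *ᵥ v)) ≤ Ideal.span (Set.range v) :=
  Ideal.span_le.2 <| Set.range_subset_iff.2 fun i =>
    Ideal.mem_span_range_iff_exists_fun.2 ⟨M i, rfl⟩

theorem Ideal.span_range_mulVec [Fintype ι] [DecidableEq ι] {M : Matrix ι ι R}
    (hM : IsUnit M.det) (v : ι → R) :
    Ideal.span (Set.range (M *ᵥ v)) = Ideal.span (Set.range v) := by
  refine (Ideal.span_range_mulVec_le M v).antisymm ?_
  conv_lhs => rw [← one_mulVec v, ← nonsing_inv_mul M hM, ← mulVec_mulVec]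
  exact Ideal.span_range_mulVec_le _ _

theorem Ideal.map_colon {R' E : Type*} [CommRing R'] [EquivLike E R R'] [RingEquivClass E R R']
    (e : E) (I J : Ideal R) : (I.colon J).map e = (I.map e).colon (J.map e) := by
  ext r
  simp only [Ideal.mem_map_of_equiv, Submodule.mem_colon, SetLike.mem_coe, smul_eq_mul]
  constructor
  · rintro ⟨x, hx, rfl⟩ _ ⟨y, hy, rfl⟩
    exact ⟨x * y, hx y hy, map_mul e x y⟩
  · intro h
    refine ⟨EquivLike.inv e r, fun s hs => ?_, EquivLike.apply_inv_apply e r⟩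
    obtain ⟨z, hz, hzs⟩ := h (e s) ⟨s, hs, rfl⟩
    have : z = EquivLike.inv e r * s :=
      EquivLike.injective e (by rw [hzs, map_mul, EquivLike.apply_inv_apply])
    rwa [← this]

variable [Fintype ι] [Fintype κ] {G : ι → R} {S : Matrix κ ι R} {x y z : R}

/- `hS`, `hgen`, `hind` say that the rows of `S` are a basis of the syzygies of `G`, and
`hx`, `hy`, `hz` that `x, y, z` is a regular sequence. -/
theorem Ideal.mem_span_range_of_mul_mem_of_syzygies (hS : S *ᵥ G = 0)
    (hgen : ∀ p : ι → R, p ⬝ᵥ G = 0 → ∃ a, a ᵥ* S = p)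
    (hind : ∀ a : κ → R, a ᵥ* S = 0 → a = 0)
    (hx : IsLeftRegular x) (hy : ∀ r, x ∣ y * r → x ∣ r)
    (hz : ∀ r, z * r ∈ Ideal.span {x, y} → r ∈ Ideal.span {x, y}) {g : R}
    (hgx : g * x ∈ Ideal.span (Set.range G)) (hgy : g * y ∈ Ideal.span (Set.range G))
    (hgz : g * z ∈ Ideal.span (Set.range G)) : g ∈ Ideal.span (Set.range G) := by
  simp only [Ideal.mem_span_range_iff_exists_fun] at hgx hgy hgz ⊢
  obtain ⟨P, hP⟩ := hgx
  obtain ⟨Q, hQ⟩ := hgy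
  obtain ⟨T, hT⟩ := hgz
  change P ⬝ᵥ G = g * x at hP
  change Q ⬝ᵥ G = g * y at hQ
  change T ⬝ᵥ G = g * z at hT
  have syz : ∀ {a b : R} {U V : ι → R}, U ⬝ᵥ G = g * a → V ⬝ᵥ G = g * b →
      ∃ c, c ᵥ* S = b • U - a • V := fun hU hV =>
    hgen _ (by rw [sub_dotProduct, smul_dotProduct, smul_dotProduct, hU, hV, smul_eq_mul,
      smul_eq_mul]; ring)
  obtain ⟨α, hα⟩ := syz hP hQ
  obtain ⟨β, hβ⟩ := syz hP hT
  obtain ⟨γ, hγ⟩ := syz hQ hT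
  have koszul : z • α = y • β - x • γ := by
    rw [← sub_eq_zero]
    apply hind
    simp only [sub_vecMul, smul_vecMul, hα, hβ, hγ]
    module
  choose u w huw using fun k => Ideal.mem_span_pair.1 <| hz (α k) <| by
    rw [show z * α k = y * β k - x * γ k by simpa using congrFun koszul k]
    exact Ideal.sub_mem _ (Ideal.mul_mem_right _ _ (Ideal.subset_span (by simp)))
      (Ideal.mul_mem_right _ _ (Ideal.subset_span (by simp)))
  have hα' : α = x • u + y • w := by ext k; simp [← huw k]; ring
  choose V hV using fun i => hy ((P - w ᵥ* S) i) ⟨(Q + u ᵥ* S) i, by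
    have := congrFun hα i
    simp only [hα', add_vecMul, smul_vecMul] at this
    simp only [Pi.sub_apply, Pi.add_apply, Pi.smul_apply, smul_eq_mul] at this ⊢
    linear_combination -this⟩
  have hP' : P = w ᵥ* S + x • V := by ext i; simp [← hV i]
  refine ⟨V, hx ?_⟩
  change x * (V ⬝ᵥ G) = x * g
  rw [← smul_eq_mul, ← smul_dotProduct, mul_comm, ← hP, hP', add_dotProduct,
    ← dotProduct_mulVec, hS, dotProduct_zero, zero_add]

theorem Ideal.colon_span_range_eq_of_syzygies (hS : S *ᵥ G = 0)
    (hgen : ∀ p : ι → R, p ⬝ᵥ G = 0 → ∃ a, a ᵥ* S = p)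
    (hind : ∀ a : κ → R, a ᵥ* S = 0 → a = 0)
    (hx : IsLeftRegular x) (hy : ∀ r, x ∣ y * r → x ∣ r)
    (hz : ∀ r, z * r ∈ Ideal.span {x, y} → r ∈ Ideal.span {x, y}) :
    (Ideal.span (Set.range G)).colon (Ideal.span {x, y, z}) = Ideal.span (Set.range G) := by
  refine le_antisymm (fun g hg => ?_) Ideal.le_colon
  rw [Ideal.colon_span, Submodule.mem_colon] at hg
  exact Ideal.mem_span_range_of_mul_mem_of_syzygies hS hgen hind hx hy hz
    (hg x (by simp)) (hg y (by simp)) (hg z (by simp))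

end Colon

theorem Set.range_fin_three {α : Type*} (v : Fin 3 → α) : Set.range v = {v 0, v 1, v 2} := by
  ext
  simp [Fin.exists_fin_succ, eq_comm]

namespace MvPolynomial

variable {σ R : Type*}

section CommSemiring

variable [CommSemiring R]

theorem mem_ideal_span_X_image_of_X_mul_mem {s : Set σ} {k : σ} (hk : k ∉ s)
    {p : MvPolynomial σ R} (h : X k * p ∈ Ideal.span (X '' s)) : p ∈ Ideal.span (X '' s) := by
  rw [mem_ideal_span_X_image] at h ⊢
  intro m hm
  obtain ⟨i, hi, hmi⟩ := h (Finsupp.single k 1 + m)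
    (by rw [mem_support_iff, coeff_X_mul]; exact mem_support_iff.1 hm)
  have hki : k ≠ i := fun hki => hk (hki ▸ hi)
  exact ⟨i, hi, by simpa [Finsupp.single_apply, hki] using hmi⟩

theorem idealOfVars_fin_three : idealOfVars (Fin 3) R = Ideal.span {X 0, X 1, X 2} := by
  rw [idealOfVars, Set.range_fin_three]

noncomputable def grad (F : MvPolynomial σ R) : σ → MvPolynomial σ R :=
  fun i => pderiv i F

noncomputable def jacobianIdeal (F : MvPolynomial σ R) : Ideal (MvPolynomial σ R) :=
  Ideal.span (Set.range (grad F))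

theorem jacobianIdeal_fin_three (F : MvPolynomial (Fin 3) R) :
    jacobianIdeal F = Ideal.span {pderiv 0 F, pderiv 1 F, pderiv 2 F} := by
  rw [jacobianIdeal, Set.range_fin_three]
  rfl

variable [Fintype σ]

noncomputable def linearSubst (L : Matrix σ σ R) : MvPolynomial σ R →ₐ[R] MvPolynomial σ R :=
  aeval (L.map C *ᵥ X)

theorem linearSubst_X (L : Matrix σ σ R) (i : σ) :
    linearSubst L (X i) = ∑ j, C (L i j) * X j :=
  aeval_X _ _

theorem linearSubst_comp (A B : Matrix σ σ R) :
    (linearSubst A).comp (linearSubst B) = linearSubst (B * A) := by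
  refine algHom_ext fun i => ?_
  simp [linearSubst_X, Matrix.mul_apply, Finset.mul_sum, Finset.sum_mul, mul_assoc]
  exact Finset.sum_comm

variable [DecidableEq σ]

theorem linearSubst_one : linearSubst (1 : Matrix σ σ R) = AlgHom.id R _ :=
  algHom_ext fun i => by simp [linearSubst_X, Matrix.one_apply]

theorem pderiv_linearSubst (L : Matrix σ σ R) (i : σ) (F : MvPolynomial σ R) :
    pderiv i (linearSubst L F) = ∑ j, C (L j i) * linearSubst L (pderiv j F) := by
  induction F using MvPolynomial.induction_on with
  | C a => simp
  | add p q hp hq => simp [hp, hq, mul_add, Finset.sum_add_distrib]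
  | mul_X p k hp =>
    have hk : pderiv i (linearSubst L (X k)) = C (L k i) := by
      simp [linearSubst_X, pderiv_X, Pi.single_apply]
    rw [map_mul, Derivation.leibniz, hp, hk]
    simp [Derivation.leibniz, pderiv_X, Pi.single_apply, mul_add, Finset.sum_add_distrib,
      Finset.mul_sum, apply_ite (linearSubst L)]
    ring_nf

noncomputable def linearChangeOfVars (L : Matrix σ σ R) [Invertible L] :
    MvPolynomial σ R ≃ₐ[R] MvPolynomial σ R :=
  AlgEquiv.ofAlgHom (linearSubst L) (linearSubst ⅟L)
    (by rw [linearSubst_comp, invOf_mul_self, linearSubst_one])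
    (by rw [linearSubst_comp, mul_invOf_self, linearSubst_one])

theorem linearChangeOfVars_apply (L : Matrix σ σ R) [Invertible L] (F : MvPolynomial σ R) :
    linearChangeOfVars L F = linearSubst L F := rfl

end CommSemiring

theorem X_dvd_of_dotProduct_eq_zero [Fintype σ] [CommRing R] [IsDomain R]
    {p g : σ → MvPolynomial σ R} (h : p ⬝ᵥ g = 0) {i : σ} (hg : ∀ j ≠ i, X i ∣ g j)
    (x : σ → R) (hx : x i = 0) (hgi : eval x (g i) ≠ 0) : X i ∣ p i := by
  classical
  have hrest : X i ∣ ∑ j ∈ Finset.univ.erase i, p j * g j :=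
    Finset.dvd_sum fun j hj => (hg j (Finset.ne_of_mem_erase hj)).mul_left _
  rw [dotProduct, ← Finset.add_sum_erase _ _ (Finset.mem_univ i)] at h
  have hpg : X i ∣ p i * g i := (dvd_add_left hrest).1 (h ▸ dvd_zero _)
  refine (X_prime.dvd_or_dvd hpg).resolve_right fun ⟨c, hc⟩ => hgi ?_
  simp [hc, hx]

section CommRing

variable [CommRing R] [Fintype σ] [DecidableEq σ]

theorem isUnit_det_map_C (L : Matrix σ σ R) [Invertible L] :
    IsUnit (L.map (C : R →+* MvPolynomial σ R)).det :=
  RingHom.map_det C L ▸ (isUnit_det_of_invertible L).map C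

theorem jacobianIdeal_linearChangeOfVars (L : Matrix σ σ R) [Invertible L]
    (F : MvPolynomial σ R) :
    jacobianIdeal (linearChangeOfVars L F) = (jacobianIdeal F).map (linearChangeOfVars L) := by
  have chain : grad (linearChangeOfVars L F) =
      (L.map C)ᵀ *ᵥ fun j => linearChangeOfVars L (pderiv j F) := by
    funext i
    simpa [grad, mulVec, dotProduct, linearChangeOfVars_apply] using pderiv_linearSubst L i F
  rw [jacobianIdeal, jacobianIdeal, Ideal.map_span, ← Set.range_comp, chain,
    Ideal.span_range_mulVec (by rw [det_transpose]; exact isUnit_det_map_C L)]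
  rfl

theorem map_idealOfVars_linearChangeOfVars (L : Matrix σ σ R) [Invertible L] :
    (idealOfVars σ R).map (linearChangeOfVars L) = idealOfVars σ R := by
  have : ⇑(linearChangeOfVars L) ∘ X = L.map C *ᵥ X := by
    funext i
    exact aeval_X _ i
  rw [idealOfVars, Ideal.map_span, ← Set.range_comp, this]
  exact Ideal.span_range_mulVec (isUnit_det_map_C L) X

end CommRing

end MvPolynomial

local notation "ℂ[x,y,z]" => MvPolynomial (Fin 3) ℂ

noncomputable def conicTriangle : ℂ[x,y,z] :=
  X 0 * X 1 * X 2 * (X 0 * X 1 + X 0 * X 2 - X 1 * X 2)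

theorem grad_conicTriangle : grad conicTriangle =
    ![X 1 * X 2 * (2 * X 0 * X 1 + 2 * X 0 * X 2 - X 1 * X 2),
      X 0 * X 2 * (2 * X 0 * X 1 + X 0 * X 2 - 2 * X 1 * X 2),
      X 0 * X 1 * (X 0 * X 1 + 2 * X 0 * X 2 - 2 * X 1 * X 2)] := by
  funext i
  fin_cases i <;> simp [grad, conicTriangle, pderiv_X] <;> ring

/-- The cross product of the two rows is `-5 • grad conicTriangle`. -/
noncomputable def conicTriangleSyzygies : Matrix (Fin 2) (Fin 3) ℂ[x,y,z] :=
  !![X 0 * (3 * X 0 - 2 * X 2), -(X 1 * (2 * X 0 + 2 * X 2)), X 2 * (3 * X 2 - 2 * X 0);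
     X 0 * (2 * X 1 - 2 * X 2), -(X 1 * (3 * X 1 + 2 * X 2)), X 2 * (2 * X 1 + 3 * X 2)]

theorem conicTriangleSyzygies_mulVec_grad :
    conicTriangleSyzygies *ᵥ grad conicTriangle = 0 := by
  rw [grad_conicTriangle]
  funext k
  fin_cases k <;> simp [conicTriangleSyzygies, mulVec, dotProduct, Fin.sum_univ_three] <;> ring

theorem eq_zero_of_vecMul_conicTriangleSyzygies_eq_zero {a : Fin 2 → ℂ[x,y,z]}
    (h : a ᵥ* conicTriangleSyzygies = 0) : a = 0 := by
  have h₁ := congrFun h 1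
  have h₂ := congrFun h 2
  simp [conicTriangleSyzygies, vecMul, dotProduct, Fin.sum_univ_two] at h₁ h₂
  have hminor : (5 * (X 1 * X 2 * (2 * X 0 * X 1 + 2 * X 0 * X 2 - X 1 * X 2)) : ℂ[x,y,z]) ≠ 0 := by
    intro h0
    have := congrArg (eval 1) h0
    norm_num at this
  have ha₀ : a 0 * (5 * (X 1 * X 2 * (2 * X 0 * X 1 + 2 * X 0 * X 2 - X 1 * X 2))) = 0 := by
    linear_combination -(X 2 * (2 * X 1 + 3 * X 2)) * h₁ - (X 1 * (3 * X 1 + 2 * X 2)) * h₂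
  have ha₁ : a 1 * (5 * (X 1 * X 2 * (2 * X 0 * X 1 + 2 * X 0 * X 2 - X 1 * X 2))) = 0 := by
    linear_combination (X 2 * (3 * X 2 - 2 * X 0)) * h₁ + (X 1 * (2 * X 0 + 2 * X 2)) * h₂
  funext k
  fin_cases k
  exacts [(mul_eq_zero.1 ha₀).resolve_right hminor, (mul_eq_zero.1 ha₁).resolve_right hminor]

theorem exists_of_dotProduct_X_mul_X_eq_zero {u₀ u₁ u₂ : ℂ[x,y,z]}
    (h : ![u₀, u₁, u₂] ⬝ᵥ ![X 1 * X 2, X 0 * X 2, X 0 * X 1] = 0) :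
    ∃ a b, u₀ = X 0 * a ∧ u₁ = X 1 * b ∧ u₂ = -(X 2 * (a + b)) := by
  obtain ⟨a, ha⟩ := X_dvd_of_dotProduct_eq_zero h (i := 0)
    (fun j hj => by fin_cases j <;> simp_all) ![0, 1, 1] rfl (by simp)
  obtain ⟨b, hb⟩ := X_dvd_of_dotProduct_eq_zero h (i := 1)
    (fun j hj => by fin_cases j <;> simp_all) ![1, 0, 1] rfl (by simp)
  simp only [cons_val_zero, cons_val_one] at ha hb
  refine ⟨a, b, ha, hb, mul_left_cancel₀ (mul_ne_zero (X_ne_zero 0) (X_ne_zero 1)) ?_⟩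
  simp [dotProduct, Fin.sum_univ_three, ha, hb] at h
  linear_combination h

theorem exists_X_mul_of_dotProduct_grad_eq_zero {p : Fin 3 → ℂ[x,y,z]}
    (h : p ⬝ᵥ grad conicTriangle = 0) :
    ∃ q₀ q₁ q₂, p 0 = X 0 * q₀ ∧ p 1 = X 1 * q₁ ∧ p 2 = X 2 * q₂ ∧
      q₀ * (2 * X 0 * X 1 + 2 * X 0 * X 2 - X 1 * X 2) +
        q₁ * (2 * X 0 * X 1 + X 0 * X 2 - 2 * X 1 * X 2) +
        q₂ * (X 0 * X 1 + 2 * X 0 * X 2 - 2 * X 1 * X 2) = 0 := by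
  rw [grad_conicTriangle] at h
  obtain ⟨q₀, hq₀⟩ := X_dvd_of_dotProduct_eq_zero h (i := 0)
    (fun j hj => by fin_cases j <;> simp_all [X_dvd_mul_iff]) ![0, 1, 1] rfl (by simp)
  obtain ⟨q₁, hq₁⟩ := X_dvd_of_dotProduct_eq_zero h (i := 1)
    (fun j hj => by fin_cases j <;> simp_all [X_dvd_mul_iff]) ![1, 0, 1] rfl (by simp)
  obtain ⟨q₂, hq₂⟩ := X_dvd_of_dotProduct_eq_zero h (i := 2)
    (fun j hj => by fin_cases j <;> simp_all [X_dvd_mul_iff]) ![1, 1, 0] rfl (by simp)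
  refine ⟨q₀, q₁, q₂, hq₀, hq₁, hq₂,
    mul_left_cancel₀ (mul_ne_zero (mul_ne_zero (X_ne_zero 0) (X_ne_zero 1)) (X_ne_zero 2)) ?_⟩
  simp [dotProduct, Fin.sum_univ_three, hq₀, hq₁, hq₂] at h
  linear_combination h

theorem exists_vecMul_conicTriangleSyzygies_eq {p : Fin 3 → ℂ[x,y,z]}
    (h : p ⬝ᵥ grad conicTriangle = 0) : ∃ a, a ᵥ* conicTriangleSyzygies = p := by
  obtain ⟨q₀, q₁, q₂, hq₀, hq₁, hq₂, hq⟩ := exists_X_mul_of_dotProduct_grad_eq_zero h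
  obtain ⟨a, b, ha, hb, hab⟩ := exists_of_dotProduct_X_mul_X_eq_zero
    (u₀ := -q₀ - 2 * q₁ - 2 * q₂) (u₁ := 2 * q₀ + q₁ + 2 * q₂) (u₂ := 2 * q₀ + 2 * q₁ + q₂)
    (by simp [dotProduct, Fin.sum_univ_three]; linear_combination hq)
  have e₀ : 5 * q₀ = a * (3 * X 0 - 2 * X 2) + b * (2 * X 1 - 2 * X 2) := by
    linear_combination 3 * ha + 2 * hb + 2 * hab
  have e₁ : 5 * q₁ = -(a * (2 * X 0 + 2 * X 2)) - b * (3 * X 1 + 2 * X 2) := by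
    linear_combination -2 * ha - 3 * hb + 2 * hab
  have e₂ : 5 * q₂ = a * (3 * X 2 - 2 * X 0) + b * (2 * X 1 + 3 * X 2) := by
    linear_combination -2 * ha + 2 * hb - 3 * hab
  have h5 : C (5⁻¹ : ℂ) * 5 = (1 : ℂ[x,y,z]) := by
    rw [← map_ofNat C 5, ← C_mul, inv_mul_cancel₀ (by norm_num), C_1]
  refine ⟨(C (5⁻¹ : ℂ) : ℂ[x,y,z]) • ![a, b], funext fun j => ?_⟩
  fin_cases j <;> simp [conicTriangleSyzygies, vecMul, dotProduct, Fin.sum_univ_two]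
  · linear_combination -hq₀ - C 5⁻¹ * X 0 * e₀ + X 0 * q₀ * h5
  · linear_combination -hq₁ - C 5⁻¹ * X 1 * e₁ + X 1 * q₁ * h5
  · linear_combination -hq₂ - C 5⁻¹ * X 2 * e₂ + X 2 * q₂ * h5

theorem colon_jacobianIdeal_conicTriangle :
    (jacobianIdeal conicTriangle).colon (idealOfVars (Fin 3) ℂ) = jacobianIdeal conicTriangle := by
  rw [idealOfVars_fin_three]
  refine Ideal.colon_span_range_eq_of_syzygies conicTriangleSyzygies_mulVec_grad
    (fun _ => exists_vecMul_conicTriangleSyzygies_eq)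
    (fun _ => eq_zero_of_vecMul_conicTriangleSyzygies_eq_zero) isRegular_X.left
    (fun _ h => (X_dvd_mul_iff.1 h).resolve_left (by simp)) fun r h => ?_
  rw [← Set.image_pair] at h ⊢
  exact mem_ideal_span_X_image_of_X_mul_mem (by decide) h

def triangleSides : Matrix (Fin 3) (Fin 3) ℂ :=
  !![1, 1, -4; 1, -1, 4; 0, 1, 0]

noncomputable instance : Invertible triangleSides :=
  invertibleOfIsUnitDet _ (by simp [triangleSides, det_fin_three])

theorem linearChangeOfVars_conicTriangle :
    linearChangeOfVars triangleSides conicTriangle = X 1 * (X 0 + X 1 - 4 * X 2) *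
      (X 0 - X 1 + 4 * X 2) * (X 0 ^ 2 + X 1 ^ 2 - 16 * X 2 ^ 2) := by
  rw [linearChangeOfVars_apply]
  simp [linearSubst_X, triangleSides, conicTriangle, Fin.sum_univ_three]
  rw [show (C 4 : MvPolynomial (Fin 3) ℂ) = 4 from map_ofNat C 4]
  ring

/-- The conic-line arrangement `y(x + y - 4z)(x - y + 4z)(x² + y² - 16z²) = 0`
(a triangle inscribed in a smooth conic) is a free plane curve: its Jacobian ideal
is saturated with respect to the irrelevant ideal `⟨x, y, z⟩`, i.e. `(J_f : m) = J_f`. -/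
theorem conic_circumscribed_about_triangle_is_free
    (f : MvPolynomial (Fin 3) ℂ)
    (hf : f = X 1 * (X 0 + X 1 - 4 * X 2) * (X 0 - X 1 + 4 * X 2) *
        (X 0 ^ 2 + X 1 ^ 2 - 16 * X 2 ^ 2))
    (Jf : Ideal (MvPolynomial (Fin 3) ℂ))
    (hJf : Jf = Ideal.span {pderiv 0 f, pderiv 1 f, pderiv 2 f})
    (m : Ideal (MvPolynomial (Fin 3) ℂ))
    (hm : m = Ideal.span {X 0, X 1, X 2}) :
    Submodule.colon Jf m = Jf := by
  rw [hJf, hm, ← jacobianIdeal_fin_three, ← idealOfVars_fin_three, hf,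
    ← linearChangeOfVars_conicTriangle, jacobianIdeal_linearChangeOfVars,
    ← map_idealOfVars_linearChangeOfVars triangleSides, ← Ideal.map_colon,
    colon_jacobianIdeal_conicTriangle]
end
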